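/- arXiv:2302.08870 — 8 statements merged into one kernel-verified Lean document; each statement's English description precedes it below -/
import Mathlib

section
/- Let G be a finite simple graph and let P be a partition of the vertex set of G into cliques that minimizes the weight ∏_{C ∈ P} (|C| + 1) among all clique partitions of G. Let C be a clique of P of maximum size. Then C is a maximal clique of G, i.e., there is no vertex v ∉ C adjacent to all vertices of C. -/
/-- `P` is a partition of the vertex set of `G` into cliques. -/
def IsCliquePartition {V : Type*} [DecidableEq V] (G : SimpleGraph V)
    (P : Finset (Finset V)) : Prop :=
  (∀ C ∈ P, G.IsClique (C : Set V)) ∧ (∀ v : V, ∃! C, C ∈ P ∧ v ∈ C)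

theorem stmt_3 {V : Type*} [Fintype V] [DecidableEq V] (G : SimpleGraph V)
    (P : Finset (Finset V)) (hP : IsCliquePartition G P)
    (hmin : ∀ Q : Finset (Finset V), IsCliquePartition G Q →
      ∏ C ∈ P, (C.card + 1) ≤ ∏ C ∈ Q, (C.card + 1))
    (C : Finset V) (hC : C ∈ P) (hmax : ∀ D ∈ P, D.card ≤ C.card) :
    ¬ ∃ v : V, v ∉ C ∧ ∀ w ∈ C, G.Adj v w := by
  classical
  rintro ⟨v, hvC, hadj⟩
  obtain ⟨hclique, hpart⟩ := hP
  obtain ⟨D, ⟨hDP, hvD⟩, hDuniq⟩ := hpart v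
  have huniq : ∀ w : V, ∀ S ∈ P, ∀ T ∈ P, w ∈ S → w ∈ T → S = T := by
    intro w S hS T hT hwS hwT
    obtain ⟨U, _, hU⟩ := hpart w
    rw [hU S ⟨hS, hwS⟩, hU T ⟨hT, hwT⟩]
  have hDC : D ≠ C := fun h => hvC (h ▸ hvD)
  have hDne : D.Nonempty := ⟨v, hvD⟩
  have hCcard : 1 ≤ C.card := le_trans (Finset.card_pos.mpr hDne) (hmax D hDP)
  have hCne : C.Nonempty := Finset.card_pos.mp hCcard
  set P' := P.filter (fun S => S.Nonempty) with hP'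
  have hmemP' : ∀ S, S ∈ P' ↔ S ∈ P ∧ S.Nonempty := by
    intro S; simp [hP', Finset.mem_filter]
  have hCP' : C ∈ P' := (hmemP' C).mpr ⟨hC, hCne⟩
  have hDP' : D ∈ P' := (hmemP' D).mpr ⟨hDP, hDne⟩
  set B : Finset (Finset V) := (P'.erase C).erase D with hB
  have hmemB : ∀ S, S ∈ B ↔ S ∈ P ∧ S.Nonempty ∧ S ≠ C ∧ S ≠ D := by
    intro S
    simp only [hB, Finset.mem_erase, hmemP']
    tauto
  set Q : Finset (Finset V) := insert (insert v C) (insert (D.erase v) B) with hQ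
  -- key non-membership facts
  have hins_ne_er : insert v C ≠ D.erase v := by
    intro h
    have : v ∈ D.erase v := h ▸ Finset.mem_insert_self v C
    exact (Finset.notMem_erase v D) this
  have hins_notB : insert v C ∉ B := by
    intro h
    obtain ⟨hSP, _, hSC, _⟩ := (hmemB _).mp h
    obtain ⟨w, hw⟩ := hCne
    exact hSC (huniq w _ hSP C hC (Finset.mem_insert_of_mem hw) hw)
  have her_notB : D.erase v ∉ B := by
    intro h
    obtain ⟨hSP, hSne, _, hSD⟩ := (hmemB _).mp h
    obtain ⟨w, hw⟩ := hSne
    have hwD : w ∈ D := Finset.mem_of_mem_erase hw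
    exact hSD (huniq w _ hSP D hDP hw hwD)
  have hins_not : insert v C ∉ insert (D.erase v) B := by
    simp only [Finset.mem_insert]
    push_neg
    exact ⟨hins_ne_er, hins_notB⟩
  -- Q is a clique partition
  have hQpart : IsCliquePartition G Q := by
    constructor
    · intro S hS
      rcases Finset.mem_insert.mp hS with h | h
      · subst h
        rw [Finset.coe_insert]
        exact (hclique C hC).insert (fun b hb _ => hadj b hb)
      · rcases Finset.mem_insert.mp h with h | h
        · subst h
          exact (hclique D hDP).subset (by exact_mod_cast Finset.erase_subset v D)
        · exact hclique _ ((hmemB _).mp h).1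
    · intro w
      obtain ⟨S, ⟨hSP, hwS⟩, hSuniq⟩ := hpart w
      -- helper: any T ∈ Q containing w
      by_cases hwv : w = v
      · subst hwv
        refine ⟨insert w C, ⟨Finset.mem_insert_self _ _, Finset.mem_insert_self _ _⟩, ?_⟩
        rintro T ⟨hTQ, hwT⟩
        rcases Finset.mem_insert.mp hTQ with h | h
        · exact h
        · rcases Finset.mem_insert.mp h with h | h
          · exact absurd (h ▸ hwT) (Finset.notMem_erase w D)
          · obtain ⟨hTP, _, _, hTD⟩ := (hmemB _).mp h
            exact absurd (huniq w T hTP D hDP hwT hvD) hTD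
      · -- w ≠ v; S is the unique P-clique containing w
        by_cases hSC : S = C
        · subst hSC
          refine ⟨insert v S, ⟨Finset.mem_insert_self _ _, Finset.mem_insert_of_mem hwS⟩, ?_⟩
          rintro T ⟨hTQ, hwT⟩
          rcases Finset.mem_insert.mp hTQ with h | h
          · exact h
          · rcases Finset.mem_insert.mp h with h | h
            · subst h
              have hwD : w ∈ D := Finset.mem_of_mem_erase hwT
              exact absurd (huniq w D hDP S hSP hwD hwS) hDC
            · obtain ⟨hTP, _, hTC, _⟩ := (hmemB _).mp h
              exact absurd (huniq w T hTP S hSP hwT hwS) hTC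
        · by_cases hSD : S = D
          · subst hSD
            refine ⟨S.erase v, ⟨Finset.mem_insert_of_mem (Finset.mem_insert_self _ _),
              Finset.mem_erase.mpr ⟨hwv, hwS⟩⟩, ?_⟩
            rintro T ⟨hTQ, hwT⟩
            rcases Finset.mem_insert.mp hTQ with h | h
            · subst h
              rcases Finset.mem_insert.mp hwT with h | h
              · exact absurd h hwv
              · exact absurd (huniq w C hC S hSP h hwS) (Ne.symm hSC)
            · rcases Finset.mem_insert.mp h with h | h
              · exact h
              · obtain ⟨hTP, _, _, hTD⟩ := (hmemB _).mp h
                exact absurd (huniq w T hTP S hSP hwT hwS) hTD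
          · have hSB : S ∈ B := (hmemB S).mpr ⟨hSP, ⟨w, hwS⟩, hSC, hSD⟩
            refine ⟨S, ⟨Finset.mem_insert_of_mem (Finset.mem_insert_of_mem hSB), hwS⟩, ?_⟩
            rintro T ⟨hTQ, hwT⟩
            rcases Finset.mem_insert.mp hTQ with h | h
            · subst h
              rcases Finset.mem_insert.mp hwT with h | h
              · exact absurd h hwv
              · exact absurd (huniq w C hC S hSP h hwS) (Ne.symm hSC)
            · rcases Finset.mem_insert.mp h with h | h
              · subst h
                have hwD : w ∈ D := Finset.mem_of_mem_erase hwT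
                exact absurd (huniq w D hDP S hSP hwD hwS) (Ne.symm hSD)
              · exact huniq w T ((hmemB T).mp h).1 S hSP hwT hwS
  -- product computations
  have hprodP : ∏ S ∈ P, (S.card + 1) = ∏ S ∈ P', (S.card + 1) := by
    rw [hP']
    exact (Finset.prod_filter_of_ne (fun S _ h => Finset.card_pos.mp (by omega))).symm
  have hR : 0 < ∏ S ∈ B, (S.card + 1) := Finset.prod_pos (fun S _ => Nat.succ_pos _)
  have hDinErase : D ∈ P'.erase C := Finset.mem_erase.mpr ⟨hDC, hDP'⟩
  have hprodP' : ∏ S ∈ P', (S.card + 1)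
      = (C.card + 1) * ((D.card + 1) * ∏ S ∈ B, (S.card + 1)) := by
    rw [← Finset.mul_prod_erase P' _ hCP', ← Finset.mul_prod_erase (P'.erase C) _ hDinErase]
  have hcard1 : (insert v C).card = C.card + 1 := Finset.card_insert_of_notMem hvC
  have hcard2 : (D.erase v).card = D.card - 1 := Finset.card_erase_of_mem hvD
  have hDcard : 1 ≤ D.card := Finset.card_pos.mpr hDne
  have hprodQ : ∏ S ∈ Q, (S.card + 1)
      = (C.card + 2) * (D.card * ∏ S ∈ B, (S.card + 1)) := by
    have h1 : D.card - 1 + 1 = D.card := by omega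
    rw [hQ, Finset.prod_insert hins_not, Finset.prod_insert her_notB, hcard1, hcard2, h1]
  have hlt : ∏ S ∈ Q, (S.card + 1) < ∏ S ∈ P, (S.card + 1) := by
    rw [hprodQ, hprodP, hprodP']
    have hDleC : D.card ≤ C.card := hmax D hDP
    have key : (C.card + 2) * D.card < (C.card + 1) * (D.card + 1) := by nlinarith
    calc (C.card + 2) * (D.card * ∏ S ∈ B, (S.card + 1))
        = ((C.card + 2) * D.card) * ∏ S ∈ B, (S.card + 1) := by ring
      _ < ((C.card + 1) * (D.card + 1)) * ∏ S ∈ B, (S.card + 1) :=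
          Nat.mul_lt_mul_of_lt_of_le key le_rfl hR
      _ = (C.card + 1) * ((D.card + 1) * ∏ S ∈ B, (S.card + 1)) := by ring
  exact absurd (hmin Q hQpart) (not_le.mpr hlt)
end

section
/- Let G be a graph with n vertices and let P be a clique partition of G in which all cliques have size at most s (with s ≥ 1). Then the weight ∏_{C ∈ P} (|C| + 1) is at least (s+1)^{⌊n/s⌋} · ((n mod s) + 1). -/
def balancedWeight (s m : ℕ) : ℕ := (s + 1) ^ (m / s) * (m % s + 1)

lemma balancedWeight_mul_add {s q r : ℕ} (hr : r < s) :
    balancedWeight s (s * q + r) = (s + 1) ^ q * (r + 1) := by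
  rw [balancedWeight, Nat.mul_add_div (by omega), Nat.mul_add_mod, Nat.div_eq_of_lt hr,
    Nat.mod_eq_of_lt hr, add_zero]

lemma succ_mul_succ_le_of_le_add {s a r : ℕ} (ha : a ≤ s) (hr : r ≤ s) (h : s ≤ a + r) :
    (s + 1) * (a + r - s + 1) ≤ (a + 1) * (r + 1) := by
  obtain ⟨c, rfl⟩ : ∃ c, s = a + c := ⟨s - a, by omega⟩
  obtain ⟨b, rfl⟩ : ∃ b, r = c + b := ⟨r - c, by omega⟩
  rw [show a + (c + b) - (a + c) = b by omega]
  nlinarith [Nat.mul_le_mul_left c (show b ≤ a by omega)]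

lemma balancedWeight_add_le {s a : ℕ} (ha : a ≤ s) (m : ℕ) :
    balancedWeight s (a + m) ≤ (a + 1) * balancedWeight s m := by
  rcases Nat.eq_zero_or_pos s with rfl | hs
  · simp [Nat.le_zero.mp ha]
  obtain ⟨q, r, hr, rfl⟩ : ∃ q r, r < s ∧ m = s * q + r :=
    ⟨m / s, m % s, Nat.mod_lt m hs, (Nat.div_add_mod m s).symm⟩
  rw [balancedWeight_mul_add hr]
  by_cases hfit : a + r < s
  · rw [show a + (s * q + r) = s * q + (a + r) by ring, balancedWeight_mul_add hfit]
    calc (s + 1) ^ q * (a + r + 1) ≤ (s + 1) ^ q * ((a + 1) * (r + 1)) :=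
          Nat.mul_le_mul_left _ (by nlinarith)
      _ = (a + 1) * ((s + 1) ^ q * (r + 1)) := by ring
  · rw [show a + (s * q + r) = s * (q + 1) + (a + r - s) by grind,
      balancedWeight_mul_add (by omega)]
    calc (s + 1) ^ (q + 1) * (a + r - s + 1) = (s + 1) ^ q * ((s + 1) * (a + r - s + 1)) := by
          ring
      _ ≤ (s + 1) ^ q * ((a + 1) * (r + 1)) :=
          Nat.mul_le_mul_left _ (succ_mul_succ_le_of_le_add ha hr.le (by omega))
      _ = (a + 1) * ((s + 1) ^ q * (r + 1)) := by ring

theorem balancedWeight_sum_le_prod {ι : Type*} {s : ℕ} (t : Finset ι) (f : ι → ℕ)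
    (hf : ∀ i ∈ t, f i ≤ s) : balancedWeight s (∑ i ∈ t, f i) ≤ ∏ i ∈ t, (f i + 1) := by
  induction t using Finset.cons_induction with
  | empty => simp [balancedWeight]
  | cons a t ha ih =>
    rw [Finset.sum_cons, Finset.prod_cons]
    calc balancedWeight s (f a + ∑ i ∈ t, f i)
        ≤ (f a + 1) * balancedWeight s (∑ i ∈ t, f i) :=
          balancedWeight_add_le (hf a (Finset.mem_cons_self a t)) _
      _ ≤ (f a + 1) * ∏ i ∈ t, (f i + 1) :=
          Nat.mul_le_mul_left _ (ih fun i hi => hf i (Finset.mem_cons_of_mem hi))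

lemma IsCliquePartition.sum_card_eq {V : Type*} [Fintype V] [DecidableEq V]
    {G : SimpleGraph V} {P : Finset (Finset V)} (hP : IsCliquePartition G P) :
    ∑ C ∈ P, C.card = Fintype.card V := by
  obtain ⟨-, hunique⟩ := hP
  have hdisj : (P : Set (Finset V)).PairwiseDisjoint id := by
    intro C hC D hD hne
    refine Finset.disjoint_left.mpr fun v hvC hvD => hne ?_
    obtain ⟨E, -, hE⟩ := hunique v
    exact (hE C ⟨hC, hvC⟩).trans (hE D ⟨hD, hvD⟩).symm
  have hcover : P.biUnion id = Finset.univ := by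
    refine Finset.eq_univ_of_forall fun v => ?_
    obtain ⟨C, ⟨hC, hvC⟩, -⟩ := hunique v
    exact Finset.mem_biUnion.mpr ⟨C, hC, hvC⟩
  rw [← Finset.card_univ, ← hcover, Finset.card_biUnion hdisj]
  rfl

theorem stmt_4_general {V : Type*} [Fintype V] [DecidableEq V] (G : SimpleGraph V)
    (n s : ℕ) (hn : n = Fintype.card V)
    (P : Finset (Finset V)) (hP : IsCliquePartition G P)
    (hsize : ∀ C ∈ P, C.card ≤ s) :
    (s + 1) ^ (n / s) * (n % s + 1) ≤ ∏ C ∈ P, (C.card + 1) := by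
  rw [hn, ← hP.sum_card_eq]
  exact balancedWeight_sum_le_prod P Finset.card hsize

theorem stmt_4 {V : Type*} [Fintype V] [DecidableEq V] (G : SimpleGraph V)
    (n s : ℕ) (hn : n = Fintype.card V) (hs : 1 ≤ s)
    (P : Finset (Finset V)) (hP : IsCliquePartition G P)
    (hsize : ∀ C ∈ P, C.card ≤ s) :
    (s + 1) ^ (n / s) * (n % s + 1) ≤ ∏ C ∈ P, (C.card + 1) :=
  stmt_4_general G n s hn P hP hsize
end

section
/- For any multiset (or finite list) of positive natural numbers a₁, ..., a_m with a_i ≤ s for all i and ∑ a_i = n, the product ∏ (a_i + 1) is at least (s+1)^{⌊n/s⌋} · ((n mod s) + 1). -/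
lemma key_step (s a m : ℕ) (hs : 1 ≤ s) (ha : 0 < a) (has : a ≤ s) :
    (s + 1) ^ ((a + m) / s) * ((a + m) % s + 1) ≤
      (a + 1) * ((s + 1) ^ (m / s) * (m % s + 1)) := by
  have hs0 : 0 < s := hs
  obtain ⟨q, r, hr, hm⟩ : ∃ q r, r < s ∧ m = r + q * s :=
    ⟨m / s, m % s, Nat.mod_lt _ hs0, (Nat.mod_add_div' m s).symm⟩
  have hdivm : m / s = q := by
    rw [hm, Nat.add_mul_div_right _ _ hs0, Nat.div_eq_of_lt hr]; omega
  have hmodm : m % s = r := by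
    rw [hm, Nat.add_mul_mod_self_right, Nat.mod_eq_of_lt hr]
  rw [hdivm, hmodm]
  have hring : (q + 1) * s = q * s + s := by ring
  rcases lt_or_ge (a + r) s with h | h
  · have heq : a + m = (a + r) + q * s := by omega
    rw [heq, Nat.add_mul_div_right _ _ hs0, Nat.div_eq_of_lt h,
      Nat.add_mul_mod_self_right, Nat.mod_eq_of_lt h]
    have h1 : a + r + 1 ≤ (a + 1) * (r + 1) := by nlinarith
    calc (s + 1) ^ (0 + q) * (a + r + 1)
        = (s + 1) ^ q * (a + r + 1) := by ring_nf
      _ ≤ (s + 1) ^ q * ((a + 1) * (r + 1)) := Nat.mul_le_mul_left _ h1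
      _ = (a + 1) * ((s + 1) ^ q * (r + 1)) := by ring
  · obtain ⟨t, ht⟩ : ∃ t, a + r = s + t := ⟨a + r - s, by omega⟩
    have htr : t < s := by omega
    have heq : a + m = t + (q + 1) * s := by omega
    rw [heq, Nat.add_mul_div_right _ _ hs0, Nat.div_eq_of_lt htr,
      Nat.add_mul_mod_self_right, Nat.mod_eq_of_lt htr]
    have h1 : (s + 1) * (t + 1) ≤ (a + 1) * (r + 1) := by nlinarith
    calc (s + 1) ^ (0 + (q + 1)) * (t + 1)
        = (s + 1) ^ q * ((s + 1) * (t + 1)) := by ring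
      _ ≤ (s + 1) ^ q * ((a + 1) * (r + 1)) := Nat.mul_le_mul_left _ h1
      _ = (a + 1) * ((s + 1) ^ q * (r + 1)) := by ring

theorem stmt_5 (s n : ℕ) (hs : 1 ≤ s) (l : List ℕ)
    (hpos : ∀ a ∈ l, 0 < a) (hbound : ∀ a ∈ l, a ≤ s) (hsum : l.sum = n) :
    (s + 1) ^ (n / s) * (n % s + 1) ≤ (l.map (· + 1)).prod := by
  induction l generalizing n with
  | nil =>
    simp at hsum
    subst hsum
    simp
  | cons a xs ih =>
    subst hsum
    simp only [List.sum_cons, List.map_cons, List.prod_cons]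
    calc (s + 1) ^ ((a + xs.sum) / s) * ((a + xs.sum) % s + 1)
        ≤ (a + 1) * ((s + 1) ^ (xs.sum / s) * (xs.sum % s + 1)) :=
          key_step s a xs.sum hs (hpos a (by simp)) (hbound a (by simp))
      _ ≤ (a + 1) * (xs.map (· + 1)).prod :=
          Nat.mul_le_mul_left _ (ih xs.sum
            (fun b hb => hpos b (List.mem_cons_of_mem _ hb))
            (fun b hb => hbound b (List.mem_cons_of_mem _ hb)) rfl)
end

section
/- Let H be a graph on 3n vertices in which every independent set has at most n vertices. If P is a partition of V(H) into more than 3 independent sets, then ∏_{I ∈ P} (|I| + 1) > (n+1)³. -/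
/-- A set of pairwise non-adjacent vertices. -/
def IsIndepSet {V : Type*} (G : SimpleGraph V) (s : Set V) : Prop :=
  s.Pairwise fun a b => ¬ G.Adj a b

/-- `P` is a partition of the vertex set of `G` into (nonempty) independent sets. -/
def IsIndepPartition {V : Type*} [DecidableEq V] (G : SimpleGraph V)
    (P : Finset (Finset V)) : Prop :=
  (∀ I ∈ P, IsIndepSet G (I : Set V)) ∧ (∀ I ∈ P, I.Nonempty) ∧
    (∀ v : V, ∃! I, I ∈ P ∧ v ∈ I)

/-- The tight lower bound function: `f n s = (n+1)^(s/n) * (s % n + 1)`. -/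
def fbound (n s : ℕ) : ℕ := (n + 1) ^ (s / n) * (s % n + 1)

lemma fbound_step {n c S : ℕ} (hn : 0 < n) (hc1 : 1 ≤ c) (hc2 : c ≤ n) :
    fbound n (S + c) ≤ (c + 1) * fbound n S := by
  have hS : n * (S / n) + S % n = S := Nat.div_add_mod S n
  set q := S / n with hq
  set r := S % n with hr
  have hrn : r < n := Nat.mod_lt _ hn
  by_cases h : r + c < n
  · have hd : (S + c) / n = q := by
      rw [← hS, add_assoc, Nat.mul_add_div hn, Nat.div_eq_of_lt h, add_zero]
    have hm : (S + c) % n = r + c := by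
      rw [← hS, add_assoc, Nat.mul_add_mod, Nat.mod_eq_of_lt h]
    unfold fbound
    rw [hd, hm, ← hq, ← hr]
    have : r + c + 1 ≤ (c + 1) * (r + 1) := by nlinarith
    calc (n + 1) ^ q * (r + c + 1) ≤ (n + 1) ^ q * ((c + 1) * (r + 1)) :=
          Nat.mul_le_mul_left _ this
      _ = (c + 1) * ((n + 1) ^ q * (r + 1)) := by ring
  · push_neg at h
    obtain ⟨t, ht⟩ : ∃ t, r + c = n + t := ⟨r + c - n, by omega⟩
    have htn : t < n := by omega
    have hd : (S + c) / n = q + 1 := by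
      rw [← hS, add_assoc, Nat.mul_add_div hn, ht, Nat.add_div_left _ hn,
        Nat.div_eq_of_lt htn]
    have hm : (S + c) % n = t := by
      rw [← hS, add_assoc, Nat.mul_add_mod, ht, Nat.add_mod_left, Nat.mod_eq_of_lt htn]
    unfold fbound
    rw [hd, hm, ← hq, ← hr]
    have key : (n + 1) * (t + 1) ≤ (c + 1) * (r + 1) := by
      have h1 : n * t ≤ c * r := by nlinarith
      nlinarith
    calc (n + 1) ^ (q + 1) * (t + 1) = (n + 1) ^ q * ((n + 1) * (t + 1)) := by ring
      _ ≤ (n + 1) ^ q * ((c + 1) * (r + 1)) := Nat.mul_le_mul_left _ key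
      _ = (c + 1) * ((n + 1) ^ q * (r + 1)) := by ring

lemma fbound_prod {α : Type*} [DecidableEq α] {n : ℕ} (hn : 0 < n) (c : α → ℕ)
    (T : Finset α) (h : ∀ i ∈ T, 1 ≤ c i ∧ c i ≤ n) :
    fbound n (∑ i ∈ T, c i) ≤ ∏ i ∈ T, (c i + 1) := by
  induction T using Finset.induction_on with
  | empty => simp [fbound, Nat.div_eq_of_lt hn, Nat.mod_eq_of_lt hn]
  | @insert a s ha ih =>
    rw [Finset.sum_insert ha, Finset.prod_insert ha, add_comm]
    have hca := h a (Finset.mem_insert_self a s)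
    calc fbound n (∑ i ∈ s, c i + c a) ≤ (c a + 1) * fbound n (∑ i ∈ s, c i) :=
          fbound_step hn hca.1 hca.2
      _ ≤ (c a + 1) * ∏ i ∈ s, (c i + 1) :=
          Nat.mul_le_mul_left _ (ih fun i hi => h i (Finset.mem_insert_of_mem hi))

theorem stmt_9 {W : Type*} [Fintype W] [DecidableEq W] (H : SimpleGraph W)
    (n : ℕ) (hcard : Fintype.card W = 3 * n)
    (hind : ∀ S : Finset W, IsIndepSet H (S : Set W) → S.card ≤ n)
    (P : Finset (Finset W)) (hP : IsIndepPartition H P) (hmany : 3 < P.card) :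
    (n + 1) ^ 3 < ∏ I ∈ P, (I.card + 1) := by
  obtain ⟨hindep, hne, huniq⟩ := hP
  -- bounds on each part
  have hub : ∀ I ∈ P, I.card ≤ n := fun I hI => hind I (hindep I hI)
  have hlb : ∀ I ∈ P, 1 ≤ I.card := fun I hI => Finset.card_pos.mpr (hne I hI)
  -- the parts are pairwise disjoint and cover W
  have hdisj : ∀ I ∈ P, ∀ J ∈ P, I ≠ J → Disjoint (id I) (id J) := by
    intro I hI J hJ hIJ
    simp only [id]
    rw [Finset.disjoint_left]
    intro v hvI hvJ
    obtain ⟨K, _, hK⟩ := huniq v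
    exact hIJ ((hK I ⟨hI, hvI⟩).trans (hK J ⟨hJ, hvJ⟩).symm)
  have hcover : P.biUnion id = Finset.univ := by
    apply Finset.eq_univ_of_forall
    intro v
    obtain ⟨I, ⟨hI, hvI⟩, _⟩ := huniq v
    exact Finset.mem_biUnion.mpr ⟨I, hI, hvI⟩
  have hsum : ∑ I ∈ P, I.card = 3 * n := by
    have := Finset.card_biUnion hdisj
    rw [hcover] at this
    simpa [hcard] using this.symm
  -- n is positive
  have hn : 0 < n := by
    obtain ⟨I, hI⟩ := Finset.card_pos.mp (by omega : 0 < P.card)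
    exact lt_of_lt_of_le (hlb I hI) (hub I hI)
  -- some part has fewer than n vertices
  have hsmall : ∃ I ∈ P, I.card < n := by
    by_contra hcon
    push_neg at hcon
    have hall : ∀ I ∈ P, I.card = n := fun I hI =>
      le_antisymm (hub I hI) (hcon I hI)
    have : ∑ I ∈ P, I.card = P.card * n := by
      rw [Finset.sum_congr rfl hall, Finset.sum_const, smul_eq_mul]
    rw [hsum] at this
    have : P.card = 3 := by
      have := Nat.eq_of_mul_eq_mul_right hn (by omega : P.card * n = 3 * n)
      omega
    omega
  obtain ⟨I₀, hI₀, hI₀small⟩ := hsmall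
  set c₀ := I₀.card with hc₀
  have hc₀1 : 1 ≤ c₀ := hlb I₀ hI₀
  -- split off I₀
  rw [← Finset.mul_prod_erase P _ hI₀]
  have hsum' : c₀ + ∑ I ∈ P.erase I₀, I.card = 3 * n := by
    rw [hc₀, Finset.add_sum_erase P _ hI₀, hsum]
  set m := ∑ I ∈ P.erase I₀, I.card with hm
  have hprodge : fbound n m ≤ ∏ I ∈ P.erase I₀, (I.card + 1) :=
    fbound_prod hn _ _ (fun I hI =>
      ⟨hlb I (Finset.mem_of_mem_erase hI), hub I (Finset.mem_of_mem_erase hI)⟩)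
  -- compute fbound n m
  set d := n - c₀ with hd
  have hmeq : m = n * 2 + d := by omega
  have hdn : d < n := by omega
  have hfm : fbound n m = (n + 1) ^ 2 * (d + 1) := by
    unfold fbound
    rw [hmeq, Nat.mul_add_div hn, Nat.div_eq_of_lt hdn, Nat.mul_add_mod,
      Nat.mod_eq_of_lt hdn, add_zero]
  have hd1 : 1 ≤ d := by omega
  have hfinal : (n + 1) ^ 3 < (c₀ + 1) * ((n + 1) ^ 2 * (d + 1)) := by
    have h1 : n + 2 ≤ (c₀ + 1) * (d + 1) := by nlinarith
    calc (n + 1) ^ 3 = (n + 1) ^ 2 * (n + 1) := by ring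
      _ < (n + 1) ^ 2 * (n + 2) := by
          have h2 : 0 < (n + 1) ^ 2 := by positivity
          exact Nat.mul_lt_mul_of_pos_left (by omega) h2
      _ ≤ (n + 1) ^ 2 * ((c₀ + 1) * (d + 1)) := Nat.mul_le_mul_left _ h1
      _ = (c₀ + 1) * ((n + 1) ^ 2 * (d + 1)) := by ring
  calc (n + 1) ^ 3 < (c₀ + 1) * ((n + 1) ^ 2 * (d + 1)) := hfinal
    _ = (c₀ + 1) * fbound n m := by rw [hfm]
    _ ≤ (c₀ + 1) * ∏ I ∈ P.erase I₀, (I.card + 1) := Nat.mul_le_mul_left _ hprodge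
end

section
/- If a graph G is 3-colorable, then the gadget graph G' (each vertex of G extended by a pendant triangle) has a partition of V(G') into independent sets of weight exactly (n+1)³, where n = |V(G)|; and if G is not 3-colorable, then every partition of V(G') into independent sets has weight strictly larger than (n+1)³. Hence G is 3-colorable if and only if G' has an independent-set partition of weight at most (n+1)³. -/
/-- The gadget graph: `G` with a pendant triangle attached to every vertex. -/
def gadget {V : Type*} (G : SimpleGraph V) : SimpleGraph (V ⊕ V × Fin 2) where
  Adj x y :=
    match x, y with
    | .inl u, .inl v => G.Adj u v
    | .inl u, .inr (v, _) => u = v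
    | .inr (v, _), .inl u => u = v
    | .inr (v, i), .inr (w, j) => v = w ∧ i ≠ j
  symm := by
    constructor
    rintro (u | ⟨u, i⟩) (v | ⟨v, j⟩) h <;>
      simp_all [SimpleGraph.adj_comm, eq_comm, Ne, and_comm]
  loopless := by constructor; rintro (u | ⟨u, i⟩) h <;> simp_all

/-!
Every independent set of `G'` meets each pendant triangle at most once, so the parts of a
partition of `V(G')` into independent sets have sizes `aᵢ ≤ n` summing to `3n`. Bernoulli's
inequality gives `(n+1)^a ≤ (a+1)^n` for `a ≤ n`, strictly for `0 < a < n`, hence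
`(∏ (aᵢ+1))^n ≥ (n+1)^(∑ aᵢ) = ((n+1)^3)^n`, with equality only if every part has size `n`,
that is, only if there are exactly three parts. Three independent parts restrict to a
3-colouring of `G`; conversely a 3-colouring of `G` extends to `G'` by giving the triangle at
`v` the two colours not used on `v`, and its three colour classes have weight `(n+1)^3`.
-/

open Finset

theorem Real.rpow_div_pow_self {x : ℝ} (hx : 0 ≤ x) (a : ℕ) {n : ℕ} (hn : n ≠ 0) :
    (x ^ ((a : ℝ) / n)) ^ n = x ^ a := by
  rw [← Real.rpow_natCast, ← Real.rpow_mul hx, div_mul_cancel₀ _ (by positivity),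
    Real.rpow_natCast]

theorem Nat.add_one_pow_le_add_one_pow {a n : ℕ} (h : a ≤ n) : (n + 1) ^ a ≤ (a + 1) ^ n := by
  rcases Nat.eq_zero_or_pos n with rfl | hn
  · simp_all
  have hn' : (0 : ℝ) < n := by exact_mod_cast hn
  suffices ((n + 1) ^ a : ℝ) ≤ (a + 1) ^ n by exact_mod_cast this
  calc ((n + 1) ^ a : ℝ) = ((1 + n) ^ ((a : ℝ) / n)) ^ n := by
        rw [Real.rpow_div_pow_self (by positivity) _ hn.ne', add_comm]
    _ ≤ (1 + (a : ℝ) / n * n) ^ n := by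
        gcongr
        exact rpow_one_add_le_one_add_mul_self (by linarith) (by positivity)
          ((div_le_one hn').2 (by exact_mod_cast h))
    _ = (a + 1) ^ n := by rw [div_mul_cancel₀ _ hn'.ne', add_comm]

theorem Nat.add_one_pow_lt_add_one_pow {a n : ℕ} (ha : 0 < a) (h : a < n) :
    (n + 1) ^ a < (a + 1) ^ n := by
  have hn' : (0 : ℝ) < n := by exact_mod_cast ha.trans h
  suffices ((n + 1) ^ a : ℝ) < (a + 1) ^ n by exact_mod_cast this
  calc ((n + 1) ^ a : ℝ) = ((1 + n) ^ ((a : ℝ) / n)) ^ n := by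
        rw [Real.rpow_div_pow_self (by positivity) _ (ha.trans h).ne', add_comm]
    _ < (1 + (a : ℝ) / n * n) ^ n := by
        refine pow_lt_pow_left₀ ?_ (by positivity) (ha.trans h).ne'
        exact rpow_one_add_lt_one_add_mul_self (by linarith) hn'.ne' (by positivity)
          ((div_lt_one hn').2 (by exact_mod_cast h))
    _ = (a + 1) ^ n := by rw [div_mul_cancel₀ _ hn'.ne', add_comm]

section Weight

variable {ι : Type*} {s : Finset ι} {f : ι → ℕ} {n k : ℕ}

theorem add_one_pow_le_prod_of_sum_eq (hle : ∀ i ∈ s, f i ≤ n) (hsum : ∑ i ∈ s, f i = k * n) :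
    (n + 1) ^ k ≤ ∏ i ∈ s, (f i + 1) := by
  rcases Nat.eq_zero_or_pos n with rfl | hn
  · rw [zero_add, one_pow]
    exact Finset.prod_pos fun i _ => Nat.succ_pos (f i)
  rw [← pow_le_pow_iff_left₀ (by positivity) (by positivity) hn.ne', ← pow_mul, ← hsum,
    ← Finset.prod_pow_eq_pow_sum, ← Finset.prod_pow]
  exact Finset.prod_le_prod' fun i hi => Nat.add_one_pow_le_add_one_pow (hle i hi)

theorem add_one_pow_lt_prod_of_sum_eq (hpos : ∀ i ∈ s, 0 < f i) (hle : ∀ i ∈ s, f i ≤ n)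
    (hsum : ∑ i ∈ s, f i = k * n) (hn : n ≠ 0) (hk : #s ≠ k) :
    (n + 1) ^ k < ∏ i ∈ s, (f i + 1) := by
  have hlt : ∃ i ∈ s, f i < n := by
    by_contra! hge
    have hconst : ∑ i ∈ s, f i = #s * n := by
      rw [Finset.sum_congr rfl fun i hi => (hle i hi).antisymm (hge i hi), Finset.sum_const,
        smul_eq_mul]
    exact hk (Nat.eq_of_mul_eq_mul_right (Nat.pos_of_ne_zero hn) (hconst.symm.trans hsum))
  obtain ⟨j, hj, hjn⟩ := hlt
  rw [← pow_lt_pow_iff_left₀ (by positivity) (by positivity) hn, ← pow_mul, ← hsum,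
    ← Finset.prod_pow_eq_pow_sum, ← Finset.prod_pow]
  exact Finset.prod_lt_prod (fun i _ => by positivity)
    (fun i hi => Nat.add_one_pow_le_add_one_pow (hle i hi))
    ⟨j, hj, Nat.add_one_pow_lt_add_one_pow (hpos j hj) hjn⟩

end Weight

section IndepPartition

variable {V : Type*} [DecidableEq V] {G : SimpleGraph V} {P : Finset (Finset V)}

theorem IsIndepPartition.sum_card [Fintype V] (hP : IsIndepPartition G P) :
    ∑ I ∈ P, #I = Fintype.card V := by
  rw [Finset.sum_card (n := 1) fun v => ?_, mul_one]
  simpa [Finset.card_eq_one_iff_existsUnique] using hP.2.2 v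

theorem IsIndepPartition.colorable (hP : IsIndepPartition G P) : G.Colorable #P := by
  choose part hpart _ using fun v => hP.2.2 v
  refine Fintype.card_coe P ▸ SimpleGraph.Coloring.colorable
    (SimpleGraph.Coloring.mk (fun v => (⟨part v, (hpart v).1⟩ : P)) fun {u v} huv heq => ?_)
  have hsame : part u = part v := congrArg Subtype.val heq
  exact hP.1 _ (hpart u).1 (hpart u).2 (hsame ▸ (hpart v).2) (G.ne_of_adj huv) huv

theorem exists_isIndepPartition_card_le_of_colorable [Fintype V] {k : ℕ} (h : G.Colorable k) :
    ∃ P : Finset (Finset V), IsIndepPartition G P ∧ #P ≤ k := by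
  obtain ⟨C⟩ := h
  let colorClass : Fin k → Finset V := fun c => {w | C w = c}
  have mem_colorClass : ∀ c w, w ∈ colorClass c ↔ C w = c := by simp [colorClass]
  refine ⟨univ.image fun v => colorClass (C v), ⟨?_, ?_, fun v => ⟨colorClass (C v), ?_, ?_⟩⟩, ?_⟩
  · simp only [mem_image, mem_univ, true_and, forall_exists_index, forall_apply_eq_imp_iff]
    intro v x hx y hy _ hxy
    rw [mem_coe, mem_colorClass] at hx hy
    exact C.valid hxy (hx.trans hy.symm)
  · simp only [mem_image, mem_univ, true_and, forall_exists_index, forall_apply_eq_imp_iff]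
    exact fun v => ⟨v, (mem_colorClass _ _).2 rfl⟩
  · exact ⟨mem_image_of_mem _ (mem_univ v), (mem_colorClass _ _).2 rfl⟩
  · simp only [mem_image, mem_univ, true_and, and_imp, forall_exists_index,
      forall_apply_eq_imp_iff, mem_colorClass]
    exact fun w hv => hv ▸ rfl
  · calc #(univ.image fun v => colorClass (C v)) ≤ #(univ.image colorClass) :=
          card_le_card (image_subset_iff.2 fun v _ => mem_image_of_mem _ (mem_univ _))
      _ ≤ k := card_image_le.trans (by simp)

end IndepPartition

section Gadget

variable {V : Type*} {G : SimpleGraph V}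

def gadgetProj : V ⊕ V × Fin 2 → V := Sum.elim id Prod.fst

theorem gadget_adj_of_gadgetProj_eq {x y : V ⊕ V × Fin 2} (hne : x ≠ y)
    (h : gadgetProj x = gadgetProj y) : (gadget G).Adj x y := by
  rcases x with u | ⟨u, i⟩ <;> rcases y with v | ⟨v, j⟩ <;>
    simp only [gadgetProj, Sum.elim_inl, Sum.elim_inr, id] at h <;> subst h
  · exact absurd rfl hne
  · rfl
  · rfl
  · exact ⟨rfl, fun hij => hne (hij ▸ rfl)⟩

theorem IsIndepSet.card_le_of_gadget [Fintype V] {I : Finset (V ⊕ V × Fin 2)}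
    (hI : IsIndepSet (gadget G) (I : Set (V ⊕ V × Fin 2))) : #I ≤ Fintype.card V :=
  card_le_card_of_injOn gadgetProj (fun _ _ => mem_coe.2 (mem_univ _)) fun _ hx _ hy hxy =>
    by_contra fun hne => hI hx hy hne (gadget_adj_of_gadgetProj_eq hne hxy)

section Partition

variable [Fintype V] [DecidableEq V] {P : Finset (Finset (V ⊕ V × Fin 2))}

theorem IsIndepPartition.card_le_of_gadget (hP : IsIndepPartition (gadget G) P) :
    ∀ I ∈ P, #I ≤ Fintype.card V :=
  fun I hI => (hP.1 I hI).card_le_of_gadget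

theorem IsIndepPartition.sum_card_gadget (hP : IsIndepPartition (gadget G) P) :
    ∑ I ∈ P, #I = 3 * Fintype.card V := by
  rw [hP.sum_card, Fintype.card_sum, Fintype.card_prod, Fintype.card_fin]
  ring

end Partition

def gadgetInl : G →g gadget G := ⟨Sum.inl, id⟩

theorem colorable_gadget_iff : (gadget G).Colorable 3 ↔ G.Colorable 3 := by
  refine ⟨fun h => h.of_hom gadgetInl, fun ⟨c⟩ => ⟨.mk (Sum.elim c fun p => c p.1 + p.2.succ) ?_⟩⟩
  have hshift : ∀ (a : Fin 3) (i : Fin 2), a ≠ a + i.succ := fun a i h =>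
    Fin.succ_ne_zero i (add_eq_left.1 h.symm)
  rintro (u | ⟨u, i⟩) (v | ⟨v, j⟩) huv
  · exact c.valid huv
  · obtain rfl : u = v := huv
    exact hshift (c u) j
  · obtain rfl : v = u := huv
    exact (hshift (c v) i).symm
  · obtain ⟨rfl, hij⟩ : u = v ∧ i ≠ j := huv
    exact fun h => hij (Fin.succ_injective _ (add_left_cancel h))

end Gadget

theorem stmt_10 {V : Type*} [Fintype V] [DecidableEq V] (G : SimpleGraph V)
    (n : ℕ) (hn : n = Fintype.card V) :
    (G.Colorable 3 →
      ∃ P : Finset (Finset (V ⊕ V × Fin 2)), IsIndepPartition (gadget G) P ∧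
        ∏ I ∈ P, (I.card + 1) = (n + 1) ^ 3) ∧
    (¬ G.Colorable 3 →
      ∀ P : Finset (Finset (V ⊕ V × Fin 2)), IsIndepPartition (gadget G) P →
        (n + 1) ^ 3 < ∏ I ∈ P, (I.card + 1)) ∧
    (G.Colorable 3 ↔
      ∃ P : Finset (Finset (V ⊕ V × Fin 2)), IsIndepPartition (gadget G) P ∧
        ∏ I ∈ P, (I.card + 1) ≤ (n + 1) ^ 3) := by
  subst hn
  have colorable_case : G.Colorable 3 → ∃ P, IsIndepPartition (gadget G) P ∧
      ∏ I ∈ P, (#I + 1) = (Fintype.card V + 1) ^ 3 := fun h => by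
    obtain ⟨P, hP, hP3⟩ :=
      exists_isIndepPartition_card_le_of_colorable (colorable_gadget_iff.2 h)
    refine ⟨P, hP, le_antisymm ?_
      (add_one_pow_le_prod_of_sum_eq hP.card_le_of_gadget hP.sum_card_gadget)⟩
    calc ∏ I ∈ P, (#I + 1) ≤ (Fintype.card V + 1) ^ #P :=
          prod_le_pow_card _ _ _ fun I hI => Nat.succ_le_succ (hP.card_le_of_gadget I hI)
      _ ≤ (Fintype.card V + 1) ^ 3 := Nat.pow_le_pow_right (Nat.succ_pos _) hP3
  have noncolorable_case : ¬ G.Colorable 3 → ∀ P, IsIndepPartition (gadget G) P →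
      (Fintype.card V + 1) ^ 3 < ∏ I ∈ P, (#I + 1) := fun h P hP => by
    have : Nonempty V := not_isEmpty_iff.1 fun _ => h (.of_isEmpty 3)
    exact add_one_pow_lt_prod_of_sum_eq (fun I hI => card_pos.2 (hP.2.1 I hI)) hP.card_le_of_gadget
      hP.sum_card_gadget Fintype.card_ne_zero
      fun h3 => h (colorable_gadget_iff.1 (h3 ▸ hP.colorable))
  refine ⟨colorable_case, noncolorable_case, fun h => ?_, fun ⟨P, hP, hle⟩ => ?_⟩
  · obtain ⟨P, hP, heq⟩ := colorable_case h
    exact ⟨P, hP, heq.le⟩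
  · by_contra h
    exact hle.not_gt (noncolorable_case h P hP)
end

section
/- For every h ∈ ℕ, let G_h be the graph obtained from the complete binary tree of height h by adding edges so that, for every leaf ℓ, the set of vertices on the root-to-leaf path to ℓ forms a clique. Then for every partition P of V(G_h) into cliques, there exists a root-to-leaf path in G_h such that all h+1 vertices on the path belong to pairwise distinct classes of P. -/
/-- Vertices of the complete binary tree of height `h`: binary strings of length at most `h`. -/
def TreeVert (h : ℕ) : Type := {l : List Bool // l.length ≤ h}

instance (h : ℕ) : DecidableEq (TreeVert h) := by
  unfold TreeVert; infer_instance

/-- The graph `G_h`: the complete binary tree of height `h` in which every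
root-to-leaf path is completed into a clique.  Two distinct vertices are adjacent
iff one lies on the root path of the other, i.e. one is a prefix of the other. -/
def treeCliqueGraph (h : ℕ) : SimpleGraph (TreeVert h) where
  Adj u v := u ≠ v ∧ (u.1 <+: v.1 ∨ v.1 <+: u.1)
  symm := by constructor; rintro u v ⟨hne, hpre⟩; exact ⟨hne.symm, hpre.symm⟩
  loopless := by constructor; rintro u ⟨hne, _⟩; exact hne rfl

/-
Colour each vertex by its class. Since every class is a chain for the prefix order, the class
of the root cannot meet both subtrees of the root, so one subtree avoids it entirely; recursing
into that subtree yields a root-to-leaf path whose vertices all have distinct colours.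
-/

def IsChainColoring {α : Type*} (h : ℕ) (c : List Bool → α) : Prop :=
  ∀ u v : List Bool, u.length ≤ h → v.length ≤ h → c u = c v → u <+: v ∨ v <+: u

namespace IsChainColoring

variable {α : Type*} {n : ℕ} {c : List Bool → α}

lemma cons (hc : IsChainColoring (n + 1) c) (b : Bool) :
    IsChainColoring n (fun l => c (b :: l)) := by
  intro u v hu hv huv
  simpa only [List.cons_prefix_cons, true_and] using
    hc (b :: u) (b :: v) (by simpa using hu) (by simpa using hv) huv

lemma exists_subtree_avoiding_root (hc : IsChainColoring (n + 1) c) :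
    ∃ b : Bool, ∀ l : List Bool, l.length ≤ n → c (b :: l) ≠ c [] := by
  by_contra! h
  obtain ⟨u, hu, hcu⟩ := h false
  obtain ⟨v, hv, hcv⟩ := h true
  have := hc (false :: u) (true :: v) (by simpa using hu) (by simpa using hv) (hcu.trans hcv.symm)
  simp [List.cons_prefix_cons] at this

theorem exists_path_injOn_prefixes (hc : IsChainColoring n c) :
    ∃ ℓ : List Bool, ℓ.length = n ∧ Set.InjOn c {u | u <+: ℓ} := by
  induction n generalizing c with
  | zero =>
    refine ⟨[], rfl, fun u (hu : u <+: []) v (hv : v <+: []) _ => ?_⟩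
    rw [List.prefix_nil] at hu hv
    rw [hu, hv]
  | succ n ih =>
    obtain ⟨b, hb⟩ := hc.exists_subtree_avoiding_root
    obtain ⟨ℓ, hℓ, hinj⟩ := ih (hc.cons b)
    refine ⟨b :: ℓ, by simp [hℓ], fun u (hu : u <+: b :: ℓ) v (hv : v <+: b :: ℓ) huv => ?_⟩
    have hlen {t : List Bool} (ht : t <+: ℓ) : t.length ≤ n := hℓ ▸ ht.length_le
    rw [List.prefix_cons_iff] at hu hv
    rcases hu with rfl | ⟨u, rfl, hu⟩ <;> rcases hv with rfl | ⟨v, rfl, hv⟩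
    · rfl
    · exact absurd huv.symm (hb v (hlen hv))
    · exact absurd huv (hb u (hlen hu))
    · rw [hinj hu hv huv]

end IsChainColoring

lemma prefix_or_prefix_of_mem_clique {h : ℕ} {C : Set (TreeVert h)}
    (hC : (treeCliqueGraph h).IsClique C) {u v : TreeVert h} (hu : u ∈ C) (hv : v ∈ C) :
    u.1 <+: v.1 ∨ v.1 <+: u.1 := by
  by_cases huv : u = v
  · exact .inl (huv ▸ List.prefix_refl _)
  · exact (hC hu hv huv).2

theorem stmt_11 (h : ℕ) (P : Finset (Finset (TreeVert h)))
    (hP : IsCliquePartition (treeCliqueGraph h) P) :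
    ∃ ℓ : List Bool, ℓ.length = h ∧
      ∀ C ∈ P, ∀ u v : TreeVert h, u ∈ C → v ∈ C →
        u.1 <+: ℓ → v.1 <+: ℓ → u = v := by
  obtain ⟨hclique, hpart⟩ := hP
  choose block hblock hblock_unique using hpart
  let c (l : List Bool) : Finset (TreeVert h) := if hl : l.length ≤ h then block ⟨l, hl⟩ else ∅
  have hc (v : TreeVert h) : c v.1 = block v := dif_pos v.2
  have hchain : IsChainColoring h c := by
    intro u v hu hv huv
    let x : TreeVert h := ⟨u, hu⟩
    let y : TreeVert h := ⟨v, hv⟩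
    have hxy : block x = block y := (hc x).symm.trans (huv.trans (hc y))
    exact prefix_or_prefix_of_mem_clique (hclique _ (hblock x).1) (hblock x).2
      (hxy ▸ (hblock y).2)
  obtain ⟨ℓ, hℓ, hinj⟩ := hchain.exists_path_injOn_prefixes
  refine ⟨ℓ, hℓ, fun C hC u v hu hv hu_pre hv_pre => Subtype.ext (hinj hu_pre hv_pre ?_)⟩
  rw [hc, hc, ← hblock_unique u C ⟨hC, hu⟩, ← hblock_unique v C ⟨hC, hv⟩]
end

section
/- Let a₁ ≥ a₂ ≥ ... ≥ a_m be a non-increasing sequence of positive natural numbers summing to n, with a₁ ≤ s. Then ∏_{i=1}^{m} (a_i + 1) is minimized (over all such sequences summing to n with all parts at most s) by the sequence consisting of ⌊n/s⌋ copies of s followed by one part equal to n mod s (if n mod s > 0). -/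
/-!
Write `n = s q + r` with `r < s`; the greedy sequence has product `(s + 1)^q (r + 1)`. Appending a
part `a ≤ s` multiplies a product by `a + 1`, while the greedy value grows by at most that factor:
either `r + a < s` and `r + a + 1 ≤ (a + 1)(r + 1)`, or the remainder wraps around to
`t = r + a - s` and `(a + 1)(r + 1) - (s + 1)(t + 1) = (s - a)(s - r) ≥ 0`.
Induction on the sequence then bounds every product from below by the greedy one.
-/

def greedyParts (s n : ℕ) : List ℕ :=
  List.replicate (n / s) s ++ if n % s = 0 then [] else [n % s]

def greedyProd (s n : ℕ) : ℕ := (s + 1) ^ (n / s) * (n % s + 1)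

lemma greedyParts_sum (s n : ℕ) : (greedyParts s n).sum = n := by
  have := Nat.div_add_mod n s
  by_cases h : n % s = 0 <;> simp [greedyParts, h, List.sum_replicate] <;> grind

lemma greedyParts_pairwise_ge {s : ℕ} (hs : 0 < s) (n : ℕ) :
    (greedyParts s n).Pairwise (· ≥ ·) := by
  have := Nat.mod_lt n hs
  by_cases h : n % s = 0 <;>
    simp [greedyParts, h, List.pairwise_append, List.pairwise_replicate, List.mem_replicate]
  omega

lemma mem_greedyParts {s n a : ℕ} (hs : 0 < s) (ha : a ∈ greedyParts s n) : 0 < a ∧ a ≤ s := by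
  have := Nat.mod_lt n hs
  by_cases h : n % s = 0 <;> simp [greedyParts, h, List.mem_replicate] at ha <;> omega

lemma prod_map_succ_greedyParts (s n : ℕ) :
    ((greedyParts s n).map (· + 1)).prod = greedyProd s n := by
  by_cases h : n % s = 0 <;> simp [greedyParts, greedyProd, h, List.prod_replicate]

lemma greedyProd_mul_add {s q r : ℕ} (hr : r < s) :
    greedyProd s (s * q + r) = (s + 1) ^ q * (r + 1) := by
  have hs : 0 < s := by omega
  rw [greedyProd, Nat.mul_add_div hs, Nat.div_eq_of_lt hr, add_zero, Nat.mul_add_mod,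
    Nat.mod_eq_of_lt hr]

lemma greedyProd_add_le {s a : ℕ} (hs : 0 < s) (ha : a ≤ s) (m : ℕ) :
    greedyProd s (m + a) ≤ (a + 1) * greedyProd s m := by
  obtain ⟨q, r, hr, rfl⟩ : ∃ q r, r < s ∧ m = s * q + r :=
    ⟨m / s, m % s, Nat.mod_lt m hs, (Nat.div_add_mod m s).symm⟩
  rw [greedyProd_mul_add hr]
  by_cases hra : r + a < s
  · rw [add_assoc, greedyProd_mul_add hra]
    have key : r + a + 1 ≤ (a + 1) * (r + 1) := by nlinarith
    calc (s + 1) ^ q * (r + a + 1) ≤ (s + 1) ^ q * ((a + 1) * (r + 1)) := by gcongr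
      _ = (a + 1) * ((s + 1) ^ q * (r + 1)) := by ring
  · obtain ⟨t, ht⟩ : ∃ t, r + a = s + t := ⟨r + a - s, by omega⟩
    have hts : t < s := by omega
    rw [show s * q + r + a = s * (q + 1) + t by rw [add_assoc, ht]; ring,
      greedyProd_mul_add hts]
    have key : (s + 1) * (t + 1) ≤ (a + 1) * (r + 1) := by nlinarith
    calc (s + 1) ^ (q + 1) * (t + 1) = (s + 1) ^ q * ((s + 1) * (t + 1)) := by ring
      _ ≤ (s + 1) ^ q * ((a + 1) * (r + 1)) := by gcongr
      _ = (a + 1) * ((s + 1) ^ q * (r + 1)) := by ring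

lemma greedyProd_sum_le_prod_map_succ {s : ℕ} (hs : 0 < s) :
    ∀ l : List ℕ, (∀ a ∈ l, a ≤ s) → greedyProd s l.sum ≤ (l.map (· + 1)).prod
  | [], _ => by simp [greedyProd]
  | a :: l, hl => by
    rw [List.sum_cons, List.map_cons, List.prod_cons, add_comm]
    calc greedyProd s (l.sum + a) ≤ (a + 1) * greedyProd s l.sum :=
          greedyProd_add_le hs (hl a List.mem_cons_self) _
      _ ≤ (a + 1) * (l.map (· + 1)).prod := by
          gcongr
          exact greedyProd_sum_le_prod_map_succ hs l fun b hb => hl b (List.mem_cons_of_mem a hb)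

theorem stmt_16_general (s n : ℕ) (hs : 1 ≤ s) :
    -- the canonical sequence: ⌊n/s⌋ copies of s followed by n mod s (if positive)
    ((List.replicate (n / s) s ++ if n % s = 0 then [] else [n % s]).Pairwise (· ≥ ·) ∧
      (∀ a ∈ List.replicate (n / s) s ++ (if n % s = 0 then [] else [n % s]),
        0 < a ∧ a ≤ s) ∧
      (List.replicate (n / s) s ++ (if n % s = 0 then [] else [n % s])).sum = n) ∧
    -- it minimizes the product of incremented entries over all such sequences
    ∀ l : List ℕ, l.Pairwise (· ≥ ·) → (∀ a ∈ l, 0 < a ∧ a ≤ s) → l.sum = n →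
      ((List.replicate (n / s) s ++
          (if n % s = 0 then [] else [n % s])).map (· + 1)).prod ≤
        (l.map (· + 1)).prod := by
  refine ⟨⟨greedyParts_pairwise_ge hs n, fun a => mem_greedyParts hs, greedyParts_sum s n⟩, ?_⟩
  rintro l - hl rfl
  show ((greedyParts s l.sum).map (· + 1)).prod ≤ _
  rw [prod_map_succ_greedyParts]
  exact greedyProd_sum_le_prod_map_succ hs l fun a ha => (hl a ha).2

theorem stmt_16 (s n : ℕ) (hs : 1 ≤ s) (hn : 1 ≤ n) :
    -- the canonical sequence: ⌊n/s⌋ copies of s followed by n mod s (if positive)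
    ((List.replicate (n / s) s ++ if n % s = 0 then [] else [n % s]).Pairwise (· ≥ ·) ∧
      (∀ a ∈ List.replicate (n / s) s ++ (if n % s = 0 then [] else [n % s]),
        0 < a ∧ a ≤ s) ∧
      (List.replicate (n / s) s ++ (if n % s = 0 then [] else [n % s])).sum = n) ∧
    -- it minimizes the product of incremented entries over all such sequences
    ∀ l : List ℕ, l.Pairwise (· ≥ ·) → (∀ a ∈ l, 0 < a ∧ a ≤ s) → l.sum = n →
      ((List.replicate (n / s) s ++
          (if n % s = 0 then [] else [n % s])).map (· + 1)).prod ≤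
        (l.map (· + 1)).prod :=
  stmt_16_general s n hs
end

section
/- For every h ∈ ℕ, the graph G_h (complete binary tree of height h with all root-to-leaf paths completed into cliques) has a clique-partitioned tree decomposition whose tree is a path, with one bag per root-to-leaf path, each bag being a single clique of size h+1; hence each bag has weight log₂(h + 2), and every edge of G_h is contained in some bag. -/
/-- The numeric value of a binary string, most significant bit first;
used to order the leaves (and hence the bags) along a path. -/
def leafVal (l : List Bool) : ℕ :=
  l.foldl (fun n b => 2 * n + cond b 1 0) 0

theorem List.ncard_setOf_prefix {α : Type*} (ℓ : List α) :
    {l | l <+: ℓ}.ncard = ℓ.length + 1 := by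
  have hrange : {l | l <+: ℓ} = Set.range (fun i : Fin (ℓ.length + 1) => ℓ.take i) := by
    ext l
    refine ⟨fun hl => ⟨⟨l.length, Nat.lt_succ_of_le hl.length_le⟩, ?_⟩, ?_⟩
    · exact (List.prefix_iff_eq_take.mp hl).symm
    · rintro ⟨i, rfl⟩
      exact List.take_prefix _ _
  have hinj : Function.Injective (fun i : Fin (ℓ.length + 1) => ℓ.take i) := by
    intro i j hij
    have := congrArg List.length hij
    simp only [List.length_take] at this
    omega
  rw [hrange, Set.ncard_range_of_injective hinj, Nat.card_eq_fintype_card, Fintype.card_fin]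

theorem ncard_setOf_treeVert_prefix {h : ℕ} {ℓ : List Bool} (hℓ : ℓ.length ≤ h) :
    {v : TreeVert h | v.1 <+: ℓ}.ncard = ℓ.length + 1 := by
  have himage : (fun v : TreeVert h => v.1) '' {v | v.1 <+: ℓ} = {l | l <+: ℓ} := by
    ext l
    exact ⟨fun ⟨v, hv, hvl⟩ => hvl ▸ hv, fun hl => ⟨⟨l, hl.length_le.trans hℓ⟩, hl, rfl⟩⟩
  calc {v : TreeVert h | v.1 <+: ℓ}.ncard
      = ((fun v : TreeVert h => v.1) '' {v | v.1 <+: ℓ}).ncard :=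
        (Set.ncard_image_of_injective _ Subtype.val_injective).symm
    _ = ℓ.length + 1 := by rw [himage, List.ncard_setOf_prefix]

theorem isClique_setOf_prefix (h : ℕ) (ℓ : List Bool) :
    (treeCliqueGraph h).IsClique {v : TreeVert h | v.1 <+: ℓ} :=
  fun _ hu _ hv huv => ⟨huv, List.prefix_or_prefix_of_prefix hu hv⟩

theorem TreeVert.exists_prefix_length_eq {h : ℕ} (v : TreeVert h) :
    ∃ ℓ : List Bool, ℓ.length = h ∧ v.1 <+: ℓ :=
  ⟨v.1 ++ List.replicate (h - v.1.length) false,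
    by simp only [List.length_append, List.length_replicate]; exact Nat.add_sub_of_le v.2,
    List.prefix_append _ _⟩

@[simp] theorem leafVal_nil : leafVal [] = 0 := rfl

theorem leafVal_concat (l : List Bool) (x : Bool) :
    leafVal (l ++ [x]) = 2 * leafVal l + cond x 1 0 := by
  simp [leafVal]

theorem leafVal_append (a b : List Bool) :
    leafVal (a ++ b) = leafVal a * 2 ^ b.length + leafVal b := by
  induction b using List.reverseRecOn with
  | nil => simp
  | append_singleton b x ih =>
    rw [← List.append_assoc, leafVal_concat, leafVal_concat, ih, List.length_append,
      List.length_singleton, pow_succ]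
    ring

theorem leafVal_lt (l : List Bool) : leafVal l < 2 ^ l.length := by
  induction l using List.reverseRecOn with
  | nil => simp
  | append_singleton l x ih =>
    rw [leafVal_concat, List.length_append, List.length_singleton, pow_succ]
    cases x <;> simp only [cond_true, cond_false] <;> omega

theorem leafVal_append_div (a b : List Bool) :
    leafVal (a ++ b) / 2 ^ b.length = leafVal a := by
  rw [leafVal_append, Nat.mul_comm, Nat.mul_add_div (Nat.two_pow_pos _),
    Nat.div_eq_of_lt (leafVal_lt b), Nat.add_zero]

theorem leafVal_append_mod (a b : List Bool) :
    leafVal (a ++ b) % 2 ^ b.length = leafVal b := by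
  rw [leafVal_append, Nat.mul_comm, Nat.mul_add_mod, Nat.mod_eq_of_lt (leafVal_lt b)]

theorem leafVal_div_of_prefix {p ℓ : List Bool} (hp : p <+: ℓ) :
    leafVal ℓ / 2 ^ (ℓ.length - p.length) = leafVal p := by
  obtain ⟨s, rfl⟩ := hp
  rw [List.length_append, Nat.add_sub_cancel_left, leafVal_append_div]

theorem leafVal_injective_of_length_eq {a b : List Bool} (hlen : a.length = b.length)
    (hval : leafVal a = leafVal b) : a = b := by
  induction a generalizing b with
  | nil => exact (List.length_eq_zero_iff.mp hlen.symm).symm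
  | cons x a ih =>
    obtain _ | ⟨y, b⟩ := b
    · simp at hlen
    have hlen' : a.length = b.length := Nat.succ.inj hlen
    rw [← List.singleton_append, ← List.singleton_append (l := b)] at hval
    have hhead : leafVal [x] = leafVal [y] := by
      rw [← leafVal_append_div [x] a, ← leafVal_append_div [y] b, hval, hlen']
    have htail : leafVal a = leafVal b := by
      rw [← leafVal_append_mod [x] a, ← leafVal_append_mod [y] b, hval, hlen']
    have hxy : x = y := by cases x <;> cases y <;> simp_all [leafVal]
    rw [hxy, ih hlen' htail]

theorem prefix_of_leafVal_le_of_le {p ℓ₁ ℓ₂ ℓ₃ : List Bool}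
    (h₁₂ : ℓ₁.length = ℓ₂.length) (h₂₃ : ℓ₂.length = ℓ₃.length)
    (hv₁₂ : leafVal ℓ₁ ≤ leafVal ℓ₂) (hv₂₃ : leafVal ℓ₂ ≤ leafVal ℓ₃)
    (hp₁ : p <+: ℓ₁) (hp₃ : p <+: ℓ₃) : p <+: ℓ₂ := by
  have hlen : (ℓ₂.take p.length).length = p.length := by
    rw [List.length_take, ← h₁₂]; exact min_eq_left hp₁.length_le
  have hval : leafVal (ℓ₂.take p.length) = leafVal p := by
    have htake := leafVal_div_of_prefix (List.take_prefix p.length ℓ₂)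
    rw [hlen] at htake
    rw [← htake]
    apply le_antisymm
    · calc leafVal ℓ₂ / 2 ^ (ℓ₂.length - p.length)
          ≤ leafVal ℓ₃ / 2 ^ (ℓ₃.length - p.length) := h₂₃ ▸ Nat.div_le_div_right hv₂₃
        _ = leafVal p := leafVal_div_of_prefix hp₃
    · calc leafVal p = leafVal ℓ₁ / 2 ^ (ℓ₁.length - p.length) := (leafVal_div_of_prefix hp₁).symm
        _ ≤ leafVal ℓ₂ / 2 ^ (ℓ₂.length - p.length) := h₁₂ ▸ Nat.div_le_div_right hv₁₂
  exact leafVal_injective_of_length_eq hlen hval ▸ List.take_prefix p.length ℓ₂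

theorem stmt_19 (h : ℕ) :
    -- every bag (the set of vertices on a root-to-leaf path) is a single clique …
    (∀ ℓ : List Bool, ℓ.length = h →
      (treeCliqueGraph h).IsClique {v : TreeVert h | v.1 <+: ℓ}) ∧
    -- … of size h + 1, hence of weight log₂(h + 2)
    (∀ ℓ : List Bool, ℓ.length = h →
      {v : TreeVert h | v.1 <+: ℓ}.ncard = h + 1 ∧
      Real.logb 2 ({v : TreeVert h | v.1 <+: ℓ}.ncard + 1) = Real.logb 2 (h + 2)) ∧
    -- every vertex of G_h is contained in some bag
    (∀ v : TreeVert h, ∃ ℓ : List Bool, ℓ.length = h ∧ v.1 <+: ℓ) ∧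
    -- every edge of G_h is contained in some bag
    (∀ u v : TreeVert h, (treeCliqueGraph h).Adj u v →
      ∃ ℓ : List Bool, ℓ.length = h ∧ u.1 <+: ℓ ∧ v.1 <+: ℓ) ∧
    -- the bags containing a fixed vertex form a contiguous segment of the path
    -- obtained by ordering the leaves by their numeric value
    (∀ ℓ₁ ℓ₂ ℓ₃ : List Bool, ℓ₁.length = h → ℓ₂.length = h → ℓ₃.length = h →
      leafVal ℓ₁ ≤ leafVal ℓ₂ → leafVal ℓ₂ ≤ leafVal ℓ₃ →
      ∀ v : TreeVert h, v.1 <+: ℓ₁ → v.1 <+: ℓ₃ → v.1 <+: ℓ₂) := by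
  refine ⟨fun ℓ _ => isClique_setOf_prefix h ℓ, fun ℓ hℓ => ?_, TreeVert.exists_prefix_length_eq,
    ?_, ?_⟩
  · have hcard := ncard_setOf_treeVert_prefix hℓ.le
    rw [hℓ] at hcard
    refine ⟨hcard, ?_⟩
    rw [hcard]
    push_cast
    ring_nf
  · rintro u v ⟨-, huv | hvu⟩
    · obtain ⟨ℓ, hℓ, hv⟩ := v.exists_prefix_length_eq
      exact ⟨ℓ, hℓ, huv.trans hv, hv⟩
    · obtain ⟨ℓ, hℓ, hu⟩ := u.exists_prefix_length_eq
      exact ⟨ℓ, hℓ, hu, hvu.trans hu⟩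
  · intro ℓ₁ ℓ₂ ℓ₃ h₁ h₂ h₃ h₁₂ h₂₃ v hv₁ hv₃
    exact prefix_of_leafVal_le_of_le (h₁.trans h₂.symm) (h₂.trans h₃.symm) h₁₂ h₂₃ hv₁ hv₃
end
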